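/- Let X be a compact Hausdorff F-space, let f ∈ C(X,X) and f_n ∈ C(X,X) for n ∈ ℕ, and let p_n ∈ X for n ∈ ℕ. Set P = {p_n | n ∈ ℕ}, A = f '' P and B = {f_n p_n | n ∈ ℕ}. If (closure A) ∩ B = ∅ and A ∩ (closure B) = ∅, then f does not belong to the closure of {f_n | n ∈ ℕ} in C_k(X,X). -/

import Mathlib

/-!
Write `A = f '' {pₙ}` and `B = {Fₙ pₙ}`. These are countable sets, each disjoint from the closure
of the other, so the classical staircase construction (used to show that regular Lindelöf spaces
are normal) puts them inside disjoint cozero-sets. In an F-space these are completely separated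
by some `h`, which vanishes on `closure A ⊇ f '' closure {pₙ}` and equals `1` at every `Fₙ pₙ`.
Hence the compact-open neighbourhood `{g | g '' closure {pₙ} ⊆ {h < 1/2}}` of `f` contains no `Fₙ`.
-/

/-- A cozero-set of a topological space. -/
def IsCozero {Y : Type*} [TopologicalSpace Y] (s : Set Y) : Prop :=
  ∃ g : Y → ℝ, Continuous g ∧ s = {y | g y ≠ 0}

/-- Two sets are completely separated if some continuous real-valued function is `0` on the
first and `1` on the second. -/
def CompletelySeparated {Y : Type*} [TopologicalSpace Y] (A B : Set Y) : Prop :=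
  ∃ h : Y → ℝ, Continuous h ∧ (∀ a ∈ A, h a = 0) ∧ (∀ b ∈ B, h b = 1)

/-- A space is an F-space if any two disjoint cozero-sets are completely separated. -/
def IsFSpace (Y : Type*) [TopologicalSpace Y] : Prop :=
  ∀ A B : Set Y, IsCozero A → IsCozero B → A ∩ B = ∅ → CompletelySeparated A B

open Set

namespace IsCozero

variable {X : Type*} [TopologicalSpace X]

lemma univ : IsCozero (univ : Set X) :=
  ⟨fun _ => 1, continuous_const, by simp⟩

lemma inter {s t : Set X} (hs : IsCozero s) (ht : IsCozero t) : IsCozero (s ∩ t) := by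
  obtain ⟨g, hg, rfl⟩ := hs
  obtain ⟨k, hk, rfl⟩ := ht
  exact ⟨g * k, hg.mul hk, by ext; simp [not_or]⟩

lemma biInter_lt {s : ℕ → Set X} (hs : ∀ n, IsCozero (s n)) (n : ℕ) :
    IsCozero (⋂ m < n, s m) := by
  induction n with
  | zero => simpa using univ
  | succ n ih => simpa only [biInter_lt_succ] using ih.inter (hs n)

lemma setOf_lt {g : X → ℝ} (hg : Continuous g) (c : ℝ) : IsCozero {x | g x < c} :=
  ⟨fun x => max (c - g x) 0, (continuous_const.sub hg).max continuous_const, by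
    ext; simp⟩

lemma setOf_gt {g : X → ℝ} (hg : Continuous g) (c : ℝ) : IsCozero {x | c < g x} :=
  ⟨fun x => max (g x - c) 0, (hg.sub continuous_const).max continuous_const, by
    ext; simp⟩

lemma iUnion {s : ℕ → Set X} (hs : ∀ n, IsCozero (s n)) : IsCozero (⋃ n, s n) := by
  choose g hg hgs using hs
  set w : ℕ → X → ℝ := fun n x => min |g n x| 1 * (1 / 2) ^ n
  have hw_nonneg (n : ℕ) (x : X) : 0 ≤ w n x := by positivity
  have hw_le (n : ℕ) (x : X) : ‖w n x‖ ≤ (1 / 2) ^ n := by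
    rw [Real.norm_of_nonneg (hw_nonneg n x)]
    exact mul_le_of_le_one_left (by positivity) (min_le_right _ _)
  have hw_pos_iff (n : ℕ) (x : X) : 0 < w n x ↔ g n x ≠ 0 := by
    simp [w]
  refine ⟨fun x => ∑' n, w n x,
    continuous_tsum (fun n => by fun_prop) summable_geometric_two hw_le, ?_⟩
  ext x
  simp only [hgs, mem_iUnion, mem_ofPred_eq]
  constructor
  · rintro ⟨n, hn⟩
    have hsum : Summable fun n => w n x :=
      .of_norm_bounded summable_geometric_two (hw_le · x)
    exact (hsum.tsum_pos (hw_nonneg · x) n ((hw_pos_iff n x).2 hn)).ne'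
  · intro hx
    by_contra! hzero
    refine hx ((tsum_congr fun n => ?_).trans tsum_zero)
    simp [w, hzero n]

end IsCozero

lemma disjoint_iUnion_inter_biInter {α : Type*} {S S' T T' : ℕ → Set α}
    (hS : ∀ n, Disjoint (S n) (S' n)) (hT : ∀ m, Disjoint (T m) (T' m)) :
    Disjoint (⋃ n, S n ∩ ⋂ m < n, T' m) (⋃ m, T m ∩ ⋂ n < m + 1, S' n) := by
  simp only [disjoint_iUnion_left, disjoint_iUnion_right]
  intro m n
  rw [disjoint_left]
  rintro x ⟨hxS, hxT'⟩ ⟨hxT, hxS'⟩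
  simp only [mem_iInter] at hxT' hxS'
  rcases lt_or_ge m n with hmn | hnm
  · exact disjoint_left.1 (hT m) hxT (hxT' m hmn)
  · exact disjoint_left.1 (hS n) hxS (hxS' n (Nat.lt_succ_of_le hnm))

section Separation

variable {X : Type*} [TopologicalSpace X]

lemma exists_isCozero_disjoint_of_notMem_closure [CompletelyRegularSpace X] {x : X} {s : Set X}
    (hx : x ∉ closure s) :
    ∃ S S' : Set X, IsCozero S ∧ IsCozero S' ∧ x ∈ S ∧ s ⊆ S' ∧ Disjoint S S' := by
  obtain ⟨g, hg, hgx, hgs⟩ :=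
    CompletelyRegularSpace.completely_regular x (closure s) isClosed_closure hx
  have hg' : Continuous fun y => (g y : ℝ) := continuous_subtype_val.comp hg
  refine ⟨{y | (g y : ℝ) < 1 / 2}, {y | 1 / 2 < (g y : ℝ)}, .setOf_lt hg' _, .setOf_gt hg' _,
    ?_, fun y hy => ?_, disjoint_left.2 fun y (h : (g y : ℝ) < 1 / 2) h' => lt_asymm h h'⟩
  · simp [hgx]
  · norm_num [hgs (subset_closure hy)]

theorem exists_isCozero_disjoint_of_separated [CompletelyRegularSpace X] {a b : ℕ → X}
    (ha : ∀ n, a n ∉ closure (range b)) (hb : ∀ n, b n ∉ closure (range a)) :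
    ∃ U V : Set X, IsCozero U ∧ IsCozero V ∧ range a ⊆ U ∧ range b ⊆ V ∧ Disjoint U V := by
  choose S S' hS hS' haS hbS' hSS' using fun n => exists_isCozero_disjoint_of_notMem_closure (ha n)
  choose T T' hT hT' hbT haT' hTT' using fun n => exists_isCozero_disjoint_of_notMem_closure (hb n)
  refine ⟨⋃ n, S n ∩ ⋂ m < n, T' m, ⋃ m, T m ∩ ⋂ n < m + 1, S' n,
    .iUnion fun n => (hS n).inter (.biInter_lt hT' n),
    .iUnion fun m => (hT m).inter (.biInter_lt hS' (m + 1)), ?_, ?_,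
    disjoint_iUnion_inter_biInter hSS' hTT'⟩
  · rintro _ ⟨n, rfl⟩
    exact mem_iUnion.2 ⟨n, haS n, mem_biInter fun m _ => haT' m (mem_range_self n)⟩
  · rintro _ ⟨m, rfl⟩
    exact mem_iUnion.2 ⟨m, hbT m, mem_biInter fun n _ => hbS' n (mem_range_self m)⟩

end Separation

theorem IsFSpace.completelySeparated_range_of_separated {X : Type*} [TopologicalSpace X]
    [CompletelyRegularSpace X] (hX : IsFSpace X) {a b : ℕ → X}
    (ha : ∀ n, a n ∉ closure (range b)) (hb : ∀ n, b n ∉ closure (range a)) :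
    CompletelySeparated (range a) (range b) := by
  obtain ⟨U, V, hU, hV, haU, hbV, hUV⟩ := exists_isCozero_disjoint_of_separated ha hb
  obtain ⟨h, hh, hU0, hV1⟩ := hX U V hU hV hUV.inter_eq
  exact ⟨h, hh, fun x hx => hU0 x (haU hx), fun x hx => hV1 x (hbV hx)⟩

theorem ContinuousMap.notMem_closure_range_of_mapsTo {X Y ι : Type*} [TopologicalSpace X]
    [TopologicalSpace Y] {f : C(X, Y)} {F : ι → C(X, Y)} {p : ι → X} {K : Set X} {O : Set Y}
    (hK : IsCompact K) (hO : IsOpen O) (hpK : ∀ i, p i ∈ K) (hfK : MapsTo f K O)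
    (hF : ∀ i, F i (p i) ∉ O) :
    f ∉ closure (range F) := by
  intro hf
  obtain ⟨_, hFi, i, rfl⟩ := mem_closure_iff.1 hf _ (isOpen_setOfPred_mapsTo hK hO) hfK
  exact hF i (hFi (hpK i))

/-- Convergence Lemma: in a compact Hausdorff F-space `X`, given `f`, a sequence `fₙ` in
`C(X, X)` and points `pₙ`, let `A = f '' {pₙ}` and `B = {fₙ pₙ}`. If `closure A ∩ B = ∅` and
`A ∩ closure B = ∅`, then `f` is not in the closure of `{fₙ | n}` in `C_k(X, X)`. -/
theorem convergence_lemma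
    (X : Type*) [TopologicalSpace X] [CompactSpace X] [T2Space X] (hX : IsFSpace X)
    (f : C(X, X)) (F : ℕ → C(X, X)) (p : ℕ → X)
    (h1 : closure ((f : X → X) '' Set.range p) ∩ Set.range (fun n => F n (p n)) = ∅)
    (h2 : (f : X → X) '' Set.range p ∩ closure (Set.range (fun n => F n (p n))) = ∅) :
    f ∉ closure (Set.range F) := by
  have hA : (f : X → X) '' range p = range (fun n => f (p n)) := (range_comp f p).symm
  rw [hA] at h1 h2
  obtain ⟨h, hh, hA0, hB1⟩ := hX.completelySeparated_range_of_separated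
    (fun n hn => h2.subset ⟨mem_range_self n, hn⟩) (fun n hn => h1.subset ⟨hn, mem_range_self n⟩)
  have hfp : MapsTo f (closure (range p)) (h ⁻¹' {0}) :=
    ((hA ▸ mapsTo_image f (range p)).closure f.continuous).mono_right
      (closure_minimal hA0 (isClosed_singleton.preimage hh))
  refine ContinuousMap.notMem_closure_range_of_mapsTo (O := {y | h y < 1 / 2})
    (isClosed_closure (s := range p)).isCompact (isOpen_lt hh continuous_const)
    (fun n => subset_closure (mem_range_self n)) (hfp.mono_right fun y hy => ?_) (fun n => ?_)
  · norm_num [show h y = 0 from hy]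
  · norm_num [hB1 _ (mem_range_self n)]
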